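/- Let R be a commutative local ring whose residue field is infinite, let n ≤ m be natural numbers, let (w_1, …, w_r) be a unimodular frame in R^m, and let finitely many tuples (v_0^i, …, v_k^i), 1 ≤ i ≤ s, of vectors in R^m be given such that each (v_0^i, …, v_k^i, w_1, …, w_r) is a unimodular frame in R^m, where k ≤ n − r − 2. Then there exists a vector v lying in the submodule of R^m spanned by the standard basis vectors e_1, …, e_n such that (v, v_0^i, …, v_k^i, w_1, …, w_r) is a unimodular frame in R^m for every i with 1 ≤ i ≤ s. -/

import Mathlib

namespace HS

variable {R : Type} [CommRing R] {m : ℕ}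

/-- A tuple of vectors in `R^m` is a *unimodular frame* if the vectors are linearly independent
and their span is a direct summand of `R^m` (i.e. they form a basis of a free direct summand). -/
def IsUnimodularFrame {K : ℕ} (v : Fin K → (Fin m → R)) : Prop :=
  LinearIndependent R v ∧
    ∃ W : Submodule R (Fin m → R), IsCompl (Submodule.span R (Set.range v)) W

/-- The `i`-th standard basis vector of `R^m`. -/
def stdBasis (i : Fin m) : Fin m → R := Pi.single i 1

end HS

/-!
Over a local ring `R` with residue field `κ`, a tuple of vectors is a unimodular frame iff its
reduction is linearly independent over `κ`: a matrix with rows `v_j` has a right inverse iff its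
reduction does, because for a lift `H` of a right inverse of the reduction `A * H` is a square
matrix reducing to `1`, hence with unit determinant. The vector `u` can therefore be found modulo
the maximal ideal, where it has to avoid `s` subspaces of dimension at most `k + 1 + r < n` inside
the `n`-dimensional span of `e_1, …, e_n`; over an infinite field this is always possible.
-/

open Function IsLocalRing Module Submodule

namespace LinearMap

variable {R M N : Type*} [Ring R] [AddCommGroup M] [Module R M] [AddCommGroup N] [Module R N]

theorem exists_leftInverse_iff_injective_and_exists_isCompl (l : M →ₗ[R] N) :
    (∃ P : N →ₗ[R] M, P ∘ₗ l = id) ↔ Injective l ∧ ∃ W : Submodule R N, IsCompl (range l) W := by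
  constructor
  · rintro ⟨P, hP⟩
    have hl : Injective l := HasLeftInverse.injective ⟨P, LinearMap.congr_fun hP⟩
    let proj : N →ₗ[R] range l := (LinearEquiv.ofInjective l hl).toLinearMap ∘ₗ P
    have hproj : ∀ y : range l, proj y = y := by
      rintro ⟨_, x, rfl⟩
      ext
      simp [proj, ← comp_apply P l, hP]
    exact ⟨hl, _, isCompl_of_proj hproj⟩
  · rintro ⟨hl, W, hW⟩
    refine ⟨(LinearEquiv.ofInjective l hl).symm.toLinearMap ∘ₗ projectionOnto _ _ hW,
      LinearMap.ext fun x => ?_⟩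
    have : projectionOnto _ _ hW (l x) = LinearEquiv.ofInjective l hl x :=
      projectionOnto_apply_left hW ⟨l x, x, rfl⟩
    simp [this]

end LinearMap

namespace Matrix

variable {R : Type*} [CommRing R] {ι κ : Type*} [Fintype ι] [Fintype κ] [DecidableEq ι]

theorem exists_mul_eq_one_iff_exists_leftInverse_vecMulLinear (A : Matrix ι κ R) :
    (∃ H : Matrix κ ι R, A * H = 1) ↔
      ∃ P : (κ → R) →ₗ[R] ι → R, P ∘ₗ A.vecMulLinear = LinearMap.id := by
  constructor
  · rintro ⟨H, hH⟩
    exact ⟨H.vecMulLinear, LinearMap.ext fun c => by simp [vecMul_vecMul, hH]⟩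
  · classical
    rintro ⟨P, hP⟩
    refine ⟨(LinearMap.toMatrix' P)ᵀ, ext fun i j => ?_⟩
    calc (A * (LinearMap.toMatrix' P)ᵀ) i j = P (Pi.single i 1 ᵥ* A) j := by
          rw [single_one_vecMul, ← LinearMap.toMatrix'_mulVec, ← vecMul_transpose]
          rfl
      _ = (1 : Matrix ι ι R) i j := by
          rw [← vecMulLinear_apply, ← LinearMap.comp_apply, hP]
          simp [one_apply, Pi.single_apply, eq_comm]

theorem exists_mul_eq_one_iff_linearIndependent_row {K : Type*} [Field K] (A : Matrix ι κ K) :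
    (∃ H : Matrix κ ι K, A * H = 1) ↔ LinearIndependent K A.row := by
  simp only [exists_mul_eq_one_iff_exists_leftInverse_vecMulLinear,
    LinearMap.exists_leftInverse_iff_injective_and_exists_isCompl, Submodule.exists_isCompl,
    and_true, ← vecMul_injective_iff]
  rfl

theorem exists_mul_eq_one_iff_exists_map_residue_mul_eq_one [IsLocalRing R] (A : Matrix ι κ R) :
    (∃ H : Matrix κ ι R, A * H = 1) ↔
      ∃ H : Matrix κ ι (ResidueField R), A.map (residue R) * H = 1 := by
  constructor
  · rintro ⟨H, hH⟩
    exact ⟨H.map (residue R), by rw [← Matrix.map_mul, hH]; simp⟩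
  · rintro ⟨H', hH'⟩
    obtain ⟨H, rfl⟩ : ∃ H : Matrix κ ι R, H.map (residue R) = H' :=
      ⟨H'.map (surjInv residue_surjective), by ext; simp [surjInv_eq]⟩
    have hdet : IsUnit (A * H).det := by
      rw [← residue_ne_zero_iff_isUnit, RingHom.map_det, RingHom.mapMatrix_apply, Matrix.map_mul,
        hH']
      simp
    exact ⟨H * (A * H)⁻¹, by rw [← Matrix.mul_assoc, mul_nonsing_inv _ hdet]⟩

end Matrix

namespace IsLocalRing

variable (R : Type*) [CommRing R] [IsLocalRing R] (ι : Type*)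

instance : RingHomSurjective (residue R) := ⟨residue_surjective⟩

noncomputable def residuePi : (ι → R) →ₛₗ[residue R] ι → ResidueField R where
  toFun x := residue R ∘ x
  map_add' x y := by ext; simp
  map_smul' c x := by ext; simp

variable {R ι}

theorem residuePi_single [DecidableEq ι] (i : ι) (a : R) :
    residuePi R ι (Pi.single i a) = Pi.single i (residue R a) := by
  ext j
  by_cases h : j = i <;> simp [residuePi, h]

end IsLocalRing

theorem Submodule.exists_mem_forall_notMem_of_forall_not_le {K V ι : Type*} [Field K] [Infinite K]
    [AddCommGroup V] [Module K V] [Finite ι] {E : Submodule K V} {S : ι → Submodule K V}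
    (h : ∀ i, ¬E ≤ S i) : ∃ x ∈ E, ∀ i, x ∉ S i := by
  obtain ⟨x, hx⟩ := exists_forall_notMem_of_forall_ne_top (fun i => (S i).comap E.subtype)
    fun i hi => h i (comap_subtype_eq_top.mp hi)
  exact ⟨x, x.2, hx⟩

namespace HS

variable {R : Type} [CommRing R] {m K : ℕ}

theorem isUnimodularFrame_iff_exists_mul_eq_one (v : Fin K → Fin m → R) :
    IsUnimodularFrame v ↔ ∃ H : Matrix (Fin m) (Fin K) R, Matrix.of v * H = 1 := by
  rw [Matrix.exists_mul_eq_one_iff_exists_leftInverse_vecMulLinear,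
    LinearMap.exists_leftInverse_iff_injective_and_exists_isCompl, range_vecMulLinear,
    Matrix.coe_vecMulLinear, Matrix.vecMul_injective_iff]
  rfl

theorem isUnimodularFrame_iff_linearIndependent_residuePi [IsLocalRing R]
    (v : Fin K → Fin m → R) :
    IsUnimodularFrame v ↔ LinearIndependent (ResidueField R) (residuePi R (Fin m) ∘ v) := by
  rw [isUnimodularFrame_iff_exists_mul_eq_one,
    Matrix.exists_mul_eq_one_iff_exists_map_residue_mul_eq_one,
    Matrix.exists_mul_eq_one_iff_linearIndependent_row]
  rfl

end HS

open HS in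
theorem exists_common_extension_of_unimodular_frames_general
    (R : Type) [CommRing R] [IsLocalRing R] [Infinite (IsLocalRing.ResidueField R)]
    (n m : ℕ) (hnm : n ≤ m) (k r s : ℕ) (hk : k + r + 2 ≤ n)
    (w : Fin r → (Fin m → R))
    (v : Fin s → Fin (k+1) → (Fin m → R))
    (hv : ∀ i, IsUnimodularFrame (Fin.append (v i) w)) :
    ∃ u : Fin m → R,
      u ∈ Submodule.span R (Set.range fun i : Fin n => stdBasis (R := R) (Fin.castLE hnm i)) ∧
      ∀ i, IsUnimodularFrame (Fin.cons u (Fin.append (v i) w)) := by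
  let ρ := residuePi R (Fin m)
  let E := (span R (Set.range fun i : Fin n => stdBasis (R := R) (Fin.castLE hnm i))).map ρ
  let S i := span (ResidueField R) (Set.range (ρ ∘ Fin.append (v i) w))
  have hE : finrank (ResidueField R) E = n := by
    have hρe : ρ ∘ (fun i : Fin n => stdBasis (Fin.castLE hnm i)) =
        (fun t => Pi.single t 1) ∘ Fin.castLE hnm :=
      funext fun i => by simp [ρ, stdBasis, residuePi_single]
    rw [show E = _ from map_span ρ _, ← Set.range_comp, hρe, finrank_span_eq_card
      ((Pi.linearIndependent_single_one _ _).comp _ (Fin.castLE_injective hnm)), Fintype.card_fin]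
  have hS : ∀ i, finrank (ResidueField R) (S i) ≤ k + 1 + r :=
    fun i => (finrank_range_le_card _).trans_eq (Fintype.card_fin _)
  obtain ⟨_, ⟨u, hu, rfl⟩, hx⟩ := exists_mem_forall_notMem_of_forall_not_le (E := E) (S := S)
    fun i hle => by have := finrank_mono hle; have := hS i; omega
  refine ⟨u, hu, fun i => ?_⟩
  rw [isUnimodularFrame_iff_linearIndependent_residuePi, Fin.comp_cons, linearIndependent_finCons]
  exact ⟨(isUnimodularFrame_iff_linearIndependent_residuePi _).mp (hv i), hx i⟩

open HS in
/-- For a local ring `R` with infinite residue field, `n ≤ m`, a unimodular frame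
`(w_1, …, w_r)` in `R^m`, and finitely many tuples `(v_0^i, …, v_k^i)` (`1 ≤ i ≤ s`) such that
each `(v_0^i, …, v_k^i, w_1, …, w_r)` is a unimodular frame, where `k ≤ n - r - 2`: there is a
vector `v` in the span of the standard basis vectors `e_1, …, e_n` such that
`(v, v_0^i, …, v_k^i, w_1, …, w_r)` is a unimodular frame for every `i`. -/
theorem exists_common_extension_of_unimodular_frames
    (R : Type) [CommRing R] [IsLocalRing R] [Infinite (IsLocalRing.ResidueField R)]
    (n m : ℕ) (hnm : n ≤ m) (k r s : ℕ) (hk : k + r + 2 ≤ n)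
    (w : Fin r → (Fin m → R)) (hw : IsUnimodularFrame w)
    (v : Fin s → Fin (k+1) → (Fin m → R))
    (hv : ∀ i, IsUnimodularFrame (Fin.append (v i) w)) :
    ∃ u : Fin m → R,
      u ∈ Submodule.span R (Set.range fun i : Fin n => stdBasis (R := R) (Fin.castLE hnm i)) ∧
      ∀ i, IsUnimodularFrame (Fin.cons u (Fin.append (v i) w)) :=
  exists_common_extension_of_unimodular_frames_general R n m hnm k r s hk w v hv
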